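/- Suppose m_Y, m_T, m_0, d : ℝ → ℝ satisfy m_Y(z) = m_0(z) + d(z)·m_T(z) for all z ≠ 0, the functions m_0 and d are continuous at z = 0, the one-sided limits T⁺ = lim_{z→0⁺} m_T(z) and T⁻ = lim_{z→0⁻} m_T(z) exist with T⁺ ≠ T⁻. Then the one-sided limits Y⁺ = lim_{z→0⁺} m_Y(z) and Y⁻ = lim_{z→0⁻} m_Y(z) exist and d(0) = (Y⁺ − Y⁻)/(T⁺ − T⁻); in particular, the value d(0) is identified from the one-sided limits of m_Y and m_T at 0. -/
import Mathlib

open Filter Topology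

/-- Identifiability of the local average treatment effect in a fuzzy regression
discontinuity design (Lemma 1 of the paper, analytic content). -/
theorem fuzzy_rdd_identification
    (mY mT m0 d : ℝ → ℝ) (Tp Tm : ℝ)
    (hmodel : ∀ z : ℝ, z ≠ 0 → mY z = m0 z + d z * mT z)
    (hm0 : ContinuousAt m0 0) (hd : ContinuousAt d 0)
    (hTp : Tendsto mT (nhdsWithin 0 (Set.Ioi 0)) (𝓝 Tp))
    (hTm : Tendsto mT (nhdsWithin 0 (Set.Iio 0)) (𝓝 Tm))
    (hne : Tp ≠ Tm) :
    ∃ Yp Ym : ℝ,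
      Tendsto mY (nhdsWithin 0 (Set.Ioi 0)) (𝓝 Yp) ∧
      Tendsto mY (nhdsWithin 0 (Set.Iio 0)) (𝓝 Ym) ∧
      d 0 = (Yp - Ym) / (Tp - Tm) := by
  have hm0p : Tendsto m0 (nhdsWithin 0 (Set.Ioi 0)) (𝓝 (m0 0)) :=
    hm0.continuousWithinAt.tendsto
  have hm0m : Tendsto m0 (nhdsWithin 0 (Set.Iio 0)) (𝓝 (m0 0)) :=
    hm0.continuousWithinAt.tendsto
  have hdp : Tendsto d (nhdsWithin 0 (Set.Ioi 0)) (𝓝 (d 0)) :=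
    hd.continuousWithinAt.tendsto
  have hdm : Tendsto d (nhdsWithin 0 (Set.Iio 0)) (𝓝 (d 0)) :=
    hd.continuousWithinAt.tendsto
  have heqp : ∀ᶠ z in nhdsWithin 0 (Set.Ioi 0), m0 z + d z * mT z = mY z := by
    filter_upwards [self_mem_nhdsWithin] with z hz
    exact (hmodel z (ne_of_gt hz)).symm
  have heqm : ∀ᶠ z in nhdsWithin 0 (Set.Iio 0), m0 z + d z * mT z = mY z := by
    filter_upwards [self_mem_nhdsWithin] with z hz
    exact (hmodel z (ne_of_lt hz)).symm
  refine ⟨m0 0 + d 0 * Tp, m0 0 + d 0 * Tm, ?_, ?_, ?_⟩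
  · exact Tendsto.congr' heqp (hm0p.add (hdp.mul hTp))
  · exact Tendsto.congr' heqm (hm0m.add (hdm.mul hTm))
  · field_simp [sub_ne_zero.mpr hne]
    ring
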